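/- arXiv:1102.1531 — 2 statements merged into one kernel-verified Lean document; each statement's English description precedes it below -/
import Mathlib

section
/- Let θ = (k_r) be a lacunary sequence. The set of statistically quasi-Cauchy sequences coincides with the set of lacunarily statistically quasi-Cauchy sequences (with respect to θ) if and only if 1 < liminf_r k_r/k_{r-1} and limsup_r k_r/k_{r-1} < ∞. -/
open Filter Finset Topology

/-- A sequence `x` converges statistically to `ℓ`. -/
def StatConvTo (x : ℕ → ℝ) (ℓ : ℝ) : Prop :=
  ∀ ε > 0, Tendsto (fun n : ℕ =>
      ((((Finset.range n).filter fun k => ε ≤ |x k - ℓ|).card : ℝ) / (n : ℝ)))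
    atTop (𝓝 0)

/-- A sequence is statistically quasi-Cauchy if its difference sequence
converges statistically to `0`. -/
def StatQC (a : ℕ → ℝ) : Prop :=
  StatConvTo (fun n => a (n + 1) - a n) 0

/-- A lacunary sequence `θ = (k_r)`: strictly increasing, `k 0 = 0`,
and `h_r = k_{r+1} - k_r → ∞`. -/
structure Lacunary where
  k : ℕ → ℕ
  strictMono : StrictMono k
  zero : k 0 = 0
  h_tendsto : Tendsto (fun r => k (r + 1) - k r) atTop atTop

/-- Lacunary statistical convergence of `x` to `ℓ` with respect to `θ`. -/
def LacStatConvTo (θ : Lacunary) (x : ℕ → ℝ) (ℓ : ℝ) : Prop :=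
  ∀ ε > 0, Tendsto (fun r : ℕ =>
      ((((Finset.Ioc (θ.k r) (θ.k (r + 1))).filter fun i => ε ≤ |x i - ℓ|).card : ℝ)
        / ((θ.k (r + 1) - θ.k r : ℕ) : ℝ)))
    atTop (𝓝 0)

/-- A sequence is lacunarily statistically quasi-Cauchy (w.r.t. `θ`). -/
def LacStatQC (θ : Lacunary) (a : ℕ → ℝ) : Prop :=
  LacStatConvTo θ (fun n => a (n + 1) - a n) 0

/-- `liminf q_r > 1` where `q_r = k_{r+1} / k_r`. -/
def LiminfQGtOne (θ : Lacunary) : Prop :=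
  ∃ a : ℝ, 1 < a ∧ ∀ᶠ r in atTop, a ≤ (θ.k (r + 1) : ℝ) / (θ.k r : ℝ)

/-- `limsup q_r < ∞` where `q_r = k_{r+1} / k_r`. -/
def LimsupQLtTop (θ : Lacunary) : Prop :=
  ∃ H : ℝ, ∀ᶠ r in atTop, (θ.k (r + 1) : ℝ) / (θ.k r : ℝ) ≤ H

/-- `A` is lacunarily statistically ward compact w.r.t. `θ`. -/
def LacStatWardCompact (θ : Lacunary) (A : Set ℝ) : Prop :=
  ∀ x : ℕ → ℝ, (∀ n, x n ∈ A) →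
    ∃ φ : ℕ → ℕ, StrictMono φ ∧ LacStatQC θ (x ∘ φ)

/-- `f` is lacunarily statistically ward continuous on `A` w.r.t. `θ`. -/
def LacStatWardContOn (θ : Lacunary) (f : ℝ → ℝ) (A : Set ℝ) : Prop :=
  ∀ x : ℕ → ℝ, (∀ n, x n ∈ A) → LacStatQC θ x → LacStatQC θ (f ∘ x)

open Asymptotics

/-!
A set `P ⊆ ℕ` is measured either by its natural density `count P n / n` or by its share
`#(P ∩ I_r) / h_r` of the blocks of `θ`. If `liminf q_r > 1` then `h_r` is comparable to
`k_{r+1}`, so block shares are dominated by densities. If `limsup q_r < ∞`, the counts up to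
`k_r` are `h`-weighted Cesàro sums of block shares, and every `n` lies between two consecutive
`k_r` of bounded ratio. Conversely, if `q_{r_j} → 1` along a sparse subsequence, the union of
the blocks `I_{r_j}` has density zero but fills infinitely many blocks; if `q_{r_j} → ∞`, the union
of the intervals `(k_{r_j}, 2 k_{r_j}]` has vanishing block shares but density at least `1/3` at
`2 k_{r_j} + 1`. Their indicators are the difference sequences of the counterexamples.
-/

theorem StrictMono.exists_mem_Ioc_of_lt {a : ℕ → ℕ} (ha : StrictMono a) {J n : ℕ}
    (hn : a J < n) : ∃ j, J ≤ j ∧ a j < n ∧ n ≤ a (j + 1) := by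
  have hex : ∃ m, n ≤ a m := ⟨n, ha.le_apply⟩
  have hJ : J < Nat.find hex := ha.lt_iff_lt.1 (hn.trans_le (Nat.find_spec hex))
  refine ⟨Nat.find hex - 1, by omega, not_le.1 (Nat.find_min hex (by omega)), ?_⟩
  rw [Nat.sub_add_cancel (by omega)]
  exact Nat.find_spec hex

theorem StrictMono.eq_of_mem_Ioc {a : ℕ → ℕ} (ha : StrictMono a) {r r' i : ℕ}
    (hi : i ∈ Ioc (a r) (a (r + 1))) (hi' : i ∈ Ioc (a r') (a (r' + 1))) : r = r' := by
  rw [mem_Ioc] at hi hi'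
  have := ha.lt_iff_lt.1 (hi.1.trans_le hi'.2)
  have := ha.lt_iff_lt.1 (hi'.1.trans_le hi.2)
  omega

theorem exists_seq_forall_frequently {p : ℕ → ℕ → Prop} (h : ∀ j, ∃ᶠ r in atTop, p j r)
    (T : ℕ → ℕ) : ∃ s : ℕ → ℕ, (∀ j, p j (s j)) ∧ ∀ j, T (s j) < s (j + 1) := by
  simp only [frequently_atTop'] at h
  choose u hu hu' using h
  refine ⟨fun j => Nat.rec (u 0 0) (fun j v => u (j + 1) (T v)) j, fun j => ?_, fun j => hu _ _⟩
  cases j <;> exact hu' _ _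

theorem card_filter_Ioc_add_count {P : ℕ → Prop} [DecidablePred P] {a b : ℕ} (h : a ≤ b) :
    #{i ∈ Ioc a b | P i} + Nat.count P (a + 1) = Nat.count P (b + 1) := by
  rw [Nat.count_eq_card_filter_range, Nat.count_eq_card_filter_range, range_eq_Ico, range_eq_Ico,
    ← Ico_union_Ico_eq_Ico (Nat.zero_le (a + 1)) (by omega : a + 1 ≤ b + 1), filter_union,
    card_union_of_disjoint (disjoint_filter_filter (Ico_disjoint_Ico_consecutive _ _ _)),
    Ico_add_one_add_one_eq_Ioc, add_comm]

namespace Lacunary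

variable (θ : Lacunary)

theorem k_pos {r : ℕ} (hr : 0 < r) : 0 < θ.k r :=
  θ.zero ▸ θ.strictMono hr

theorem blockLength_pos (r : ℕ) : 0 < θ.k (r + 1) - θ.k r :=
  Nat.sub_pos_of_lt (θ.strictMono r.lt_succ_self)

theorem sum_blockLength (m : ℕ) : ∑ j ∈ range m, ((θ.k (j + 1) - θ.k j : ℕ) : ℝ) = θ.k m := by
  have hlen : ∀ j, ((θ.k (j + 1) - θ.k j : ℕ) : ℝ) = θ.k (j + 1) - θ.k j := fun j =>
    Nat.cast_sub (θ.strictMono.monotone (Nat.le_add_right j 1))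
  simp_rw [hlen]
  rw [sum_range_sub (fun j => (θ.k j : ℝ)), θ.zero, Nat.cast_zero, sub_zero]

theorem count_k_add_one_eq_sum (P : ℕ → Prop) [DecidablePred P] (m : ℕ) :
    (Nat.count P (θ.k m + 1) : ℝ) =
      Nat.count P 1 + ∑ j ∈ range m, (#{i ∈ Ioc (θ.k j) (θ.k (j + 1)) | P i} : ℝ) := by
  have hblock : ∀ j, (#{i ∈ Ioc (θ.k j) (θ.k (j + 1)) | P i} : ℝ) =
      Nat.count P (θ.k (j + 1) + 1) - Nat.count P (θ.k j + 1) := fun j => by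
    rw [eq_sub_iff_add_eq, ← Nat.cast_add,
      card_filter_Ioc_add_count (θ.strictMono j.lt_succ_self).le]
  simp_rw [hblock]
  rw [sum_range_sub (fun j => (Nat.count P (θ.k j + 1) : ℝ)), θ.zero]
  ring

end Lacunary

def HasDensityZero (P : ℕ → Prop) [DecidablePred P] : Prop :=
  (fun n => (Nat.count P n : ℝ)) =o[atTop] fun n => (n : ℝ)

def HasLacDensityZero (θ : Lacunary) (P : ℕ → Prop) [DecidablePred P] : Prop :=
  (fun r => (#{i ∈ Ioc (θ.k r) (θ.k (r + 1)) | P i} : ℝ)) =o[atTop]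
    fun r => ((θ.k (r + 1) - θ.k r : ℕ) : ℝ)

theorem statConvTo_iff (x : ℕ → ℝ) (ℓ : ℝ) :
    StatConvTo x ℓ ↔ ∀ ε > 0, HasDensityZero fun k => ε ≤ |x k - ℓ| := by
  refine forall₂_congr fun ε _ => ?_
  rw [HasDensityZero, isLittleO_iff_tendsto fun n hn => by simp_all]
  simp only [Nat.count_eq_card_filter_range]

theorem lacStatConvTo_iff (θ : Lacunary) (x : ℕ → ℝ) (ℓ : ℝ) :
    LacStatConvTo θ x ℓ ↔ ∀ ε > 0, HasLacDensityZero θ fun k => ε ≤ |x k - ℓ| := by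
  refine forall₂_congr fun ε _ => ?_
  rw [HasLacDensityZero, isLittleO_iff_tendsto fun r hr => ?_]
  exact absurd hr (Nat.cast_ne_zero.2 (θ.blockLength_pos r).ne')

section Density

variable {θ : Lacunary} {P Q : ℕ → Prop} [DecidablePred P] [DecidablePred Q]

theorem HasDensityZero.mono (h : HasDensityZero Q) (hPQ : ∀ i, P i → Q i) : HasDensityZero P :=
  (isBigO_of_le _ fun n => by
    simpa only [Real.norm_natCast, Nat.cast_le] using
      Nat.count_mono_left fun i _ => hPQ i).trans_isLittleO h

theorem HasLacDensityZero.mono (h : HasLacDensityZero θ Q) (hPQ : ∀ i, P i → Q i) :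
    HasLacDensityZero θ P :=
  (isBigO_of_le _ fun r => by
    simpa only [Real.norm_natCast, Nat.cast_le] using
      card_le_card (monotone_filter_right _ fun i _ => hPQ i)).trans_isLittleO h

variable (P) in
theorem statConvTo_indicator_iff :
    StatConvTo (fun i => if P i then 1 else 0) 0 ↔ HasDensityZero P := by
  rw [statConvTo_iff]
  refine ⟨fun h => (h 1 one_pos).mono fun i hi => by simp [hi], fun h ε hε => h.mono fun i hi => ?_⟩
  by_contra hPi
  simp only [hPi, if_false, sub_zero, abs_zero] at hi
  linarith

variable (P) in
theorem lacStatConvTo_indicator_iff :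
    LacStatConvTo θ (fun i => if P i then 1 else 0) 0 ↔ HasLacDensityZero θ P := by
  rw [lacStatConvTo_iff]
  refine ⟨fun h => (h 1 one_pos).mono fun i hi => by simp [hi], fun h ε hε => h.mono fun i hi => ?_⟩
  by_contra hPi
  simp only [hPi, if_false, sub_zero, abs_zero] at hi
  linarith

theorem LiminfQGtOne.isBigO_blockLength (hθ : LiminfQGtOne θ) :
    (fun r => ((θ.k (r + 1) + 1 : ℕ) : ℝ)) =O[atTop] fun r => ((θ.k (r + 1) - θ.k r : ℕ) : ℝ) := by
  obtain ⟨a, ha, hq⟩ := hθ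
  refine IsBigO.of_bound (2 * a / (a - 1)) ?_
  filter_upwards [hq, eventually_gt_atTop 0] with r hqr hr
  have hkr : (0 : ℝ) < θ.k r := by exact_mod_cast θ.k_pos hr
  have hk1 : (1 : ℝ) ≤ θ.k (r + 1) := by exact_mod_cast θ.k_pos r.succ_pos
  rw [le_div_iff₀ hkr] at hqr
  rw [Real.norm_natCast, Real.norm_natCast, Nat.cast_sub (θ.strictMono r.lt_succ_self).le,
    div_mul_eq_mul_div, le_div_iff₀ (by linarith)]
  push_cast
  nlinarith

theorem HasDensityZero.hasLacDensityZero (hθ : LiminfQGtOne θ) (hP : HasDensityZero P) :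
    HasLacDensityZero θ P := by
  have hblock : ∀ r, #{i ∈ Ioc (θ.k r) (θ.k (r + 1)) | P i} ≤ Nat.count P (θ.k (r + 1) + 1) :=
    fun r => (card_filter_Ioc_add_count (P := P) (θ.strictMono r.lt_succ_self).le).symm ▸
      Nat.le_add_right _ _
  have hend : Tendsto (fun r => θ.k (r + 1) + 1) atTop atTop :=
    (tendsto_add_atTop_nat 1).comp (θ.strictMono.tendsto_atTop.comp (tendsto_add_atTop_nat 1))
  exact (isBigO_of_le _ fun r => by simpa using hblock r).trans_isLittleO
    ((hP.comp_tendsto hend).trans_isBigO hθ.isBigO_blockLength)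

theorem HasLacDensityZero.isLittleO_count (hP : HasLacDensityZero θ P) :
    (fun m => (Nat.count P (θ.k m + 1) : ℝ)) =o[atTop] fun m => (θ.k m : ℝ) := by
  have hk : Tendsto (fun m => (θ.k m : ℝ)) atTop atTop :=
    tendsto_natCast_atTop_atTop.comp θ.strictMono.tendsto_atTop
  have hsum := hP.sum_range (fun r => Nat.cast_nonneg _) (by simpa only [θ.sum_blockLength] using hk)
  simp only [θ.sum_blockLength] at hsum
  simp_rw [θ.count_k_add_one_eq_sum P]
  exact (isLittleO_const_left.2 (Or.inr (tendsto_norm_atTop_atTop.comp hk))).add hsum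

theorem HasLacDensityZero.hasDensityZero (hθ : LimsupQLtTop θ) (hP : HasLacDensityZero θ P) :
    HasDensityZero P := by
  obtain ⟨H, hH⟩ := hθ
  have hH₁ : 0 < max H 1 := lt_max_of_lt_right one_pos
  rw [HasDensityZero, isLittleO_iff]
  intro c hc
  have hkey : ∀ᶠ r in atTop, (Nat.count P (θ.k (r + 1) + 1) : ℝ) ≤ c * θ.k r := by
    filter_upwards [hH, eventually_gt_atTop 0,
      (tendsto_add_atTop_nat 1).eventually (hP.isLittleO_count.def (div_pos hc hH₁))]
      with r hq hr hcount
    have hkr : (0 : ℝ) < θ.k r := by exact_mod_cast θ.k_pos hr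
    rw [div_le_iff₀ hkr] at hq
    simp only [Real.norm_natCast] at hcount
    calc (Nat.count P (θ.k (r + 1) + 1) : ℝ) ≤ c / max H 1 * θ.k (r + 1) := hcount
      _ ≤ c / max H 1 * (max H 1 * θ.k r) := by
          gcongr; exact hq.trans (by gcongr; exact le_max_left _ _)
      _ = c * θ.k r := by field_simp
  obtain ⟨R, hR⟩ := eventually_atTop.1 hkey
  filter_upwards [eventually_gt_atTop (θ.k R)] with n hn
  obtain ⟨r, hRr, hrn, hnr⟩ := θ.strictMono.exists_mem_Ioc_of_lt hn
  rw [Real.norm_natCast, Real.norm_natCast]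
  calc (Nat.count P n : ℝ) ≤ Nat.count P (θ.k (r + 1) + 1) := by
        exact_mod_cast Nat.count_monotone P (by omega)
    _ ≤ c * θ.k r := hR r hRr
    _ ≤ c * n := by gcongr

theorem count_le_of_subset_Ioc {a b : ℕ → ℕ} (ha : Monotone a) (hb : Monotone b)
    (hP : ∀ i, P i → ∃ j, a j < i ∧ i ≤ b j) {i n : ℕ} (hn : n ≤ a (i + 2)) :
    Nat.count P n ≤ b i + (b (i + 1) - a (i + 1)) := by
  rw [Nat.count_eq_card_filter_range]
  calc _ ≤ #(Ioc 0 (b i) ∪ Ioc (a (i + 1)) (b (i + 1))) := card_le_card fun x hx => ?_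
    _ ≤ _ := (card_union_le _ _).trans (by simp)
  rw [mem_filter, mem_range] at hx
  obtain ⟨j, hj⟩ := hP x hx.2
  rw [mem_union, mem_Ioc, mem_Ioc]
  rcases lt_trichotomy j (i + 1) with h | rfl | h
  · exact Or.inl ⟨by omega, hj.2.trans (hb (by omega))⟩
  · exact Or.inr hj
  · have := ha (show i + 2 ≤ j by omega)
    omega

theorem hasDensityZero_of_subset_sparse_Ioc {a b : ℕ → ℕ} (ha : StrictMono a)
    (hab : ∀ j, a j ≤ b j) (hlen : ∀ j, (j + 1) * (b j - a j) ≤ a j)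
    (hgap : ∀ j, (j + 1) * b j ≤ a (j + 1)) (hP : ∀ i, P i → ∃ j, a j < i ∧ i ≤ b j) :
    HasDensityZero P := by
  have hb : Monotone b := monotone_nat_of_le_succ fun j =>
    (Nat.le_mul_of_pos_left _ j.succ_pos).trans ((hgap j).trans (hab _))
  rw [HasDensityZero, isLittleO_iff]
  intro c hc
  obtain ⟨J, hJ⟩ := exists_nat_gt (2 / c)
  filter_upwards [eventually_gt_atTop (a (J + 1))] with n hn
  obtain ⟨j, hJj, hjn, hnj⟩ := ha.exists_mem_Ioc_of_lt hn
  obtain ⟨i, rfl⟩ : ∃ i, j = i + 1 := ⟨j - 1, by omega⟩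
  have hcount := count_le_of_subset_Ioc ha.monotone hb hP hnj
  have hmul : (i + 1) * Nat.count P n ≤ 2 * n :=
    calc (i + 1) * Nat.count P n ≤ (i + 1) * b i + (i + 1) * (b (i + 1) - a (i + 1)) := by
          rw [← mul_add]; exact Nat.mul_le_mul_left _ hcount
      _ ≤ a (i + 1) + a (i + 1) :=
          add_le_add (hgap i) ((Nat.mul_le_mul_right _ (by omega)).trans (hlen (i + 1)))
      _ ≤ 2 * n := by omega
  have hci : 2 < c * (i + 1) := by
    rw [div_lt_iff₀ hc] at hJ
    have hJi : (J : ℝ) ≤ i := by exact_mod_cast (by omega : J ≤ i)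
    nlinarith [mul_le_mul_of_nonneg_left hJi hc.le]
  rw [Real.norm_natCast, Real.norm_natCast]
  have hmul' : ((i : ℝ) + 1) * Nat.count P n ≤ 2 * n := by exact_mod_cast hmul
  refine le_of_mul_le_mul_left ?_ (by positivity : (0 : ℝ) < i + 1)
  nlinarith [(Nat.cast_nonneg n : (0 : ℝ) ≤ n)]

theorem card_filter_Ioc_of_subset_Ioc_two_mul {s : ℕ → ℕ}
    (hblock : ∀ j, 2 * θ.k (s j) ≤ θ.k (s j + 1))
    (hP : ∀ i, P i → ∃ j, θ.k (s j) < i ∧ i ≤ 2 * θ.k (s j)) (r : ℕ) :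
    #{i ∈ Ioc (θ.k r) (θ.k (r + 1)) | P i} = 0 ∨
      r ∈ Set.range s ∧ #{i ∈ Ioc (θ.k r) (θ.k (r + 1)) | P i} ≤ θ.k r := by
  have hmem : ∀ i ∈ Ioc (θ.k r) (θ.k (r + 1)), P i → ∃ j, s j = r ∧ i ∈ Ioc (θ.k r) (2 * θ.k r) :=
    fun i hi hPi => by
      obtain ⟨j, hj₁, hj₂⟩ := hP i hPi
      obtain rfl := θ.strictMono.eq_of_mem_Ioc (mem_Ioc.2 ⟨hj₁, hj₂.trans (hblock j)⟩) hi
      exact ⟨j, rfl, mem_Ioc.2 ⟨hj₁, hj₂⟩⟩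
  by_cases hr : r ∈ Set.range s
  · refine Or.inr ⟨hr, ?_⟩
    calc _ ≤ #(Ioc (θ.k r) (2 * θ.k r)) := card_le_card fun i hi => by
          obtain ⟨_, _, hi'⟩ := hmem i (mem_filter.1 hi).1 (mem_filter.1 hi).2
          exact hi'
      _ = θ.k r := by rw [Nat.card_Ioc]; omega
  · refine Or.inl (card_eq_zero.2 (filter_eq_empty_iff.2 fun i hi hPi => ?_))
    obtain ⟨j, hj, _⟩ := hmem i hi hPi
    exact hr ⟨j, hj⟩

theorem hasLacDensityZero_of_subset_Ioc_two_mul {s : ℕ → ℕ} (hs : StrictMono s)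
    (hlong : ∀ j, (j + 1) * θ.k (s j) ≤ θ.k (s j + 1) - θ.k (s j))
    (hP : ∀ i, P i → ∃ j, θ.k (s j) < i ∧ i ≤ 2 * θ.k (s j)) : HasLacDensityZero θ P := by
  have hblock : ∀ j, 2 * θ.k (s j) ≤ θ.k (s j + 1) := fun j => by
    have := hlong j
    have : θ.k (s j) ≤ (j + 1) * θ.k (s j) := Nat.le_mul_of_pos_left _ j.succ_pos
    omega
  rw [HasLacDensityZero, isLittleO_iff]
  intro c hc
  obtain ⟨J, hJ⟩ := exists_nat_one_div_lt hc
  filter_upwards [eventually_gt_atTop (s J)] with r hr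
  rw [Real.norm_natCast, Real.norm_natCast]
  rcases card_filter_Ioc_of_subset_Ioc_two_mul hblock hP r with hzero | ⟨⟨j, rfl⟩, hcard⟩
  · rw [hzero, Nat.cast_zero]
    positivity
  · have hcj : 1 < c * (j + 1) := by
      rw [div_lt_iff₀ (by positivity)] at hJ
      have hJj : (J : ℝ) ≤ j := by exact_mod_cast (hs.lt_iff_lt.1 hr).le
      nlinarith
    have hlong' : ((j : ℝ) + 1) * θ.k (s j) ≤ ((θ.k (s j + 1) - θ.k (s j) : ℕ) : ℝ) := by
      exact_mod_cast hlong j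
    calc (#{i ∈ Ioc (θ.k (s j)) (θ.k (s j + 1)) | P i} : ℝ) ≤ θ.k (s j) := by
          exact_mod_cast hcard
      _ ≤ c * (j + 1) * θ.k (s j) := le_mul_of_one_le_left (Nat.cast_nonneg _) hcj.le
      _ ≤ _ := by rw [mul_assoc]; gcongr

theorem not_hasDensityZero_of_frequently (h : ∃ᶠ m in atTop, ∀ i ∈ Ioc m (2 * m), P i) :
    ¬HasDensityZero P := by
  intro hP
  have hten : Tendsto (fun m => 2 * m + 1) atTop atTop :=
    tendsto_atTop_mono (fun m => by rw [id]; omega) tendsto_id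
  obtain ⟨m, hfull, hm, hcount⟩ := (h.and_eventually ((eventually_gt_atTop 0).and
    (hten.eventually (hP.def (by norm_num : (0 : ℝ) < 1 / 4))))).exists
  have hm' : m ≤ Nat.count P (2 * m + 1) := by
    rw [Nat.count_eq_card_filter_range]
    calc m = #(Ioc m (2 * m)) := by rw [Nat.card_Ioc]; omega
      _ ≤ _ := card_le_card fun i hi =>
        mem_filter.2 ⟨mem_range.2 (by rw [mem_Ioc] at hi; omega), hfull i hi⟩
  simp only [Real.norm_natCast] at hcount
  push_cast at hcount
  have : (1 : ℝ) ≤ m := by exact_mod_cast hm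
  have : (m : ℝ) ≤ Nat.count P (2 * m + 1) := by exact_mod_cast hm'
  linarith

theorem not_hasLacDensityZero_of_frequently
    (h : ∃ᶠ r in atTop, ∀ i ∈ Ioc (θ.k r) (θ.k (r + 1)), P i) : ¬HasLacDensityZero θ P := by
  intro hP
  obtain ⟨r, hfull, hr⟩ := (h.and_eventually (hP.def one_half_pos)).exists
  rw [filter_true_of_mem hfull, Nat.card_Ioc, Real.norm_natCast] at hr
  have : (0 : ℝ) < ((θ.k (r + 1) - θ.k r : ℕ) : ℝ) := by exact_mod_cast θ.blockLength_pos r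
  linarith

end Density

section Counterexamples

variable {θ : Lacunary}

theorem frequently_of_not_liminfQGtOne (hθ : ¬LiminfQGtOne θ) (j : ℕ) :
    ∃ᶠ r in atTop, (j + 1) * (θ.k (r + 1) - θ.k r) ≤ θ.k r := by
  simp only [LiminfQGtOne, not_exists, not_and, not_eventually, not_le] at hθ
  refine ((hθ (1 + 1 / (j + 1)) (by simp; positivity)).and_eventually
    (eventually_gt_atTop 0)).mono fun r ⟨hq, hr⟩ => ?_
  have hkr : (0 : ℝ) < θ.k r := by exact_mod_cast θ.k_pos hr
  rw [div_lt_iff₀ hkr] at hq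
  have : (j + 1) * θ.k (r + 1) < (j + 2) * θ.k r := by
    have : ((j : ℝ) + 1) * θ.k (r + 1) < (j + 2) * θ.k r := by
      field_simp at hq; linarith
    exact_mod_cast this
  have e : (j + 2) * θ.k r = (j + 1) * θ.k r + θ.k r := by ring
  rw [Nat.mul_sub]
  omega

theorem frequently_of_not_limsupQLtTop (hθ : ¬LimsupQLtTop θ) (j : ℕ) :
    ∃ᶠ r in atTop, (j + 1) * θ.k r ≤ θ.k (r + 1) - θ.k r := by
  simp only [LimsupQLtTop, not_exists, not_eventually, not_le] at hθ
  refine ((hθ (j + 2)).and_eventually (eventually_gt_atTop 0)).mono fun r ⟨hq, hr⟩ => ?_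
  have hkr : (0 : ℝ) < θ.k r := by exact_mod_cast θ.k_pos hr
  rw [lt_div_iff₀ hkr] at hq
  have : (j + 2) * θ.k r < θ.k (r + 1) := by exact_mod_cast hq
  have e : (j + 2) * θ.k r = (j + 1) * θ.k r + θ.k r := by ring
  omega

theorem exists_statConvTo_not_lacStatConvTo (hθ : ¬LiminfQGtOne θ) :
    ∃ x : ℕ → ℝ, StatConvTo x 0 ∧ ¬LacStatConvTo θ x 0 := by
  obtain ⟨s, hlen, hgap⟩ := exists_seq_forall_frequently (frequently_of_not_liminfQGtOne hθ)
    fun r => (r + 1) * θ.k (r + 1)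
  have hs : StrictMono s := strictMono_nat_of_lt_succ fun j =>
    (Nat.lt_succ_self _).trans_le ((Nat.le_mul_of_pos_right _ (θ.k_pos (s j).succ_pos)).trans
      (hgap j).le)
  classical
  let P i := ∃ j, θ.k (s j) < i ∧ i ≤ θ.k (s j + 1)
  refine ⟨fun i => if P i then 1 else 0, (statConvTo_indicator_iff P).2 ?_,
    fun h => not_hasLacDensityZero_of_frequently ?_ ((lacStatConvTo_indicator_iff P).1 h)⟩
  · refine hasDensityZero_of_subset_sparse_Ioc (θ.strictMono.comp hs)
      (fun j => θ.strictMono.monotone (Nat.le_succ _)) hlen (fun j => ?_) fun i hi => hi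
    calc (j + 1) * θ.k (s j + 1) ≤ (s j + 1) * θ.k (s j + 1) :=
          Nat.mul_le_mul_right _ (Nat.succ_le_succ hs.le_apply)
      _ ≤ s (j + 1) := (hgap j).le
      _ ≤ θ.k (s (j + 1)) := θ.strictMono.le_apply
  · exact hs.tendsto_atTop.frequently (Frequently.of_forall fun j i hi => ⟨j, mem_Ioc.1 hi⟩)

theorem exists_lacStatConvTo_not_statConvTo (hθ : ¬LimsupQLtTop θ) :
    ∃ x : ℕ → ℝ, LacStatConvTo θ x 0 ∧ ¬StatConvTo x 0 := by
  obtain ⟨s, hs, hlong⟩ := extraction_forall_of_frequently (frequently_of_not_limsupQLtTop hθ)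
  classical
  let P i := ∃ j, θ.k (s j) < i ∧ i ≤ 2 * θ.k (s j)
  refine ⟨fun i => if P i then 1 else 0,
    (lacStatConvTo_indicator_iff P).2 (hasLacDensityZero_of_subset_Ioc_two_mul hs hlong
      fun i hi => hi),
    fun h => not_hasDensityZero_of_frequently ?_ ((statConvTo_indicator_iff P).1 h)⟩
  exact (θ.strictMono.comp hs).tendsto_atTop.frequently
    (Frequently.of_forall fun j i hi => ⟨j, mem_Ioc.1 hi⟩)

end Counterexamples

theorem forall_statQC_iff_lacStatQC_iff (θ : Lacunary) :
    (∀ a : ℕ → ℝ, StatQC a ↔ LacStatQC θ a) ↔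
      ∀ x : ℕ → ℝ, StatConvTo x 0 ↔ LacStatConvTo θ x 0 := by
  refine ⟨fun h x => ?_, fun h a => h _⟩
  simpa only [StatQC, LacStatQC, sum_range_succ_sub_sum] using h fun n => ∑ i ∈ range n, x i

theorem statQC_eq_lacStatQC_iff (θ : Lacunary) :
    (∀ a : ℕ → ℝ, StatQC a ↔ LacStatQC θ a) ↔ (LiminfQGtOne θ ∧ LimsupQLtTop θ) := by
  rw [forall_statQC_iff_lacStatQC_iff]
  refine ⟨fun h => ⟨?_, ?_⟩, fun ⟨hl, hu⟩ x => ⟨fun hx => ?_, fun hx => ?_⟩⟩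
  · by_contra hl
    obtain ⟨x, hx, hx'⟩ := exists_statConvTo_not_lacStatConvTo hl
    exact hx' ((h x).1 hx)
  · by_contra hu
    obtain ⟨x, hx, hx'⟩ := exists_lacStatConvTo_not_statConvTo hu
    exact hx' ((h x).2 hx)
  · exact (lacStatConvTo_iff θ x 0).2 fun ε hε =>
      ((statConvTo_iff x 0).1 hx ε hε).hasLacDensityZero hl
  · exact (statConvTo_iff x 0).2 fun ε hε =>
      ((lacStatConvTo_iff θ x 0).1 hx ε hε).hasDensityZero hu
end

section
/- Let A ⊆ ℝ be lacunarily statistically ward compact and f : A → ℝ lacunarily statistically ward continuous on A. Then f is uniformly continuous on A. -/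
open Filter Finset Topology

/-!
If `f` is not uniformly continuous on `A`, there are `x n, y n ∈ A` with `|x n - y n| → 0` but
`|f (x n) - f (y n)| ≥ ε`. Ward compactness makes `x` lacunarily statistically quasi-Cauchy along a
subsequence, and interleaving it with the matching `y`s, as `x₀, y₀, x₂, y₂, x₄, …`, keeps this
property: each step is either some `y n - x n` or, up to such a term, the sum of two consecutive
steps of the subsequence. Applying `f` turns every other step into one of size at least `ε`, so
the image is not lacunarily statistically quasi-Cauchy, contradicting ward continuity.
-/

namespace Lacunary

variable (θ : Lacunary)

lemma tendsto_blockLen_atTop :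
    Tendsto (fun r => ((θ.k (r + 1) - θ.k r : ℕ) : ℝ)) atTop atTop :=
  tendsto_natCast_atTop_atTop.comp θ.h_tendsto

lemma blockLen_pos (r : ℕ) : (0 : ℝ) < ((θ.k (r + 1) - θ.k r : ℕ) : ℝ) := by
  exact_mod_cast Nat.sub_pos_of_lt (θ.strictMono r.lt_succ_self)

end Lacunary

def LacDensityZero (θ : Lacunary) (p : ℕ → Prop) [DecidablePred p] : Prop :=
  Tendsto (fun r : ℕ => (#{i ∈ Ioc (θ.k r) (θ.k (r + 1)) | p i} : ℝ)
    / ((θ.k (r + 1) - θ.k r : ℕ) : ℝ)) atTop (𝓝 0)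

lemma lacStatQC_iff {θ : Lacunary} {a : ℕ → ℝ} :
    LacStatQC θ a ↔ ∀ ε > 0, LacDensityZero θ fun i => ε ≤ |a (i + 1) - a i| := by
  simp only [LacStatQC, LacStatConvTo, LacDensityZero, sub_zero]

namespace LacDensityZero

variable {θ : Lacunary} {p q : ℕ → Prop} [DecidablePred p] [DecidablePred q]

lemma of_card_le_add (hq : LacDensityZero θ q) (C : ℕ)
    (h : ∀ a b, #{i ∈ Ioc a b | p i} ≤ #{i ∈ Ioc a b | q i} + C) : LacDensityZero θ p := by
  have hC : Tendsto (fun r => (C : ℝ) / ((θ.k (r + 1) - θ.k r : ℕ) : ℝ)) atTop (𝓝 0) :=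
    tendsto_const_nhds.div_atTop θ.tendsto_blockLen_atTop
  refine squeeze_zero (fun r => by positivity) (fun r => ?_) (by simpa using hq.add hC)
  rw [← add_div]
  gcongr
  exact_mod_cast h _ _

lemma mono (hq : LacDensityZero θ q) (hpq : ∀ i, p i → q i) : LacDensityZero θ p :=
  hq.of_card_le_add 0 fun a b => by
    simpa using card_le_card (monotone_filter_right (Ioc a b) fun i _ => hpq i)

lemma or (hp : LacDensityZero θ p) (hq : LacDensityZero θ q) :
    LacDensityZero θ fun i => p i ∨ q i := by
  refine squeeze_zero (fun r => by positivity) (fun r => ?_) (by simpa using hp.add hq)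
  rw [← add_div, filter_or]
  gcongr
  exact_mod_cast card_union_le _ _

lemma comp_sub_one (hp : LacDensityZero θ p) : LacDensityZero θ fun i => p (i - 1) := by
  refine hp.of_card_le_add 1 fun a b => ?_
  calc #{i ∈ Ioc a b | p (i - 1)} ≤ #{i ∈ insert a (Ioc a b) | p i} := by
        refine card_le_card_of_injOn (· - 1) (fun i hi => ?_) (fun i hi j hj hij => ?_)
        · simp only [mem_coe, mem_filter, mem_insert, mem_Ioc] at hi ⊢
          exact ⟨by omega, hi.2⟩
        · simp only [mem_coe, mem_filter, mem_Ioc] at hi hj hij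
          omega
    _ ≤ #{i ∈ Ioc a b | p i} + 1 := by
        rw [filter_insert]
        split_ifs
        · exact card_insert_le _ _
        · exact Nat.le_succ _

lemma of_eventually_not (hp : ∀ᶠ i in atTop, ¬ p i) : LacDensityZero θ p := by
  obtain ⟨N, hN⟩ := eventually_atTop.1 hp
  have hfalse : LacDensityZero θ fun _ => False := by simp [LacDensityZero]
  refine hfalse.of_card_le_add N fun a b => ?_
  calc #{i ∈ Ioc a b | p i} ≤ #(range N) := card_le_card fun i hi =>
        mem_range.2 (by_contra fun h => hN i (not_lt.1 h) (mem_filter.1 hi).2)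
    _ = #{i ∈ Ioc a b | False} + N := by simp

end LacDensityZero

lemma card_filter_even_Ioc (a b : ℕ) : b / 2 - a / 2 ≤ #{i ∈ Ioc a b | Even i} := by
  have hmaps : ∀ j ∈ Ioc (a / 2) (b / 2), 2 * j ∈ {i ∈ Ioc a b | Even i} := fun j hj => by
    simp only [mem_filter, mem_Ioc] at hj ⊢
    exact ⟨by omega, even_two_mul j⟩
  simpa using card_le_card_of_injOn (2 * ·) hmaps fun i _ j _ hij => by simp only at hij; omega

lemma not_lacDensityZero_even (θ : Lacunary) : ¬ LacDensityZero θ Even := by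
  intro h
  obtain ⟨r, hr, hlen⟩ := ((h.eventually (gt_mem_nhds (by norm_num : (0 : ℝ) < 1 / 4))).and
    (θ.h_tendsto.eventually_ge_atTop 2)).exists
  have hcount : θ.k (r + 1) - θ.k r ≤ 4 * #{i ∈ Ioc (θ.k r) (θ.k (r + 1)) | Even i} := by
    have := card_filter_even_Ioc (θ.k r) (θ.k (r + 1))
    omega
  rw [div_lt_iff₀ (θ.blockLen_pos r)] at hr
  have : ((θ.k (r + 1) - θ.k r : ℕ) : ℝ) ≤ 4 * #{i ∈ Ioc (θ.k r) (θ.k (r + 1)) | Even i} := by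
    exact_mod_cast hcount
  linarith

/-- `interleave u v = (u 0, v 0, u 2, v 2, u 4, v 4, …)`. -/
def interleave (u v : ℕ → ℝ) (i : ℕ) : ℝ := if Even i then u i else v (i - 1)

section interleave

variable {u v : ℕ → ℝ} {i : ℕ}

lemma interleave_succ_sub_of_even (hi : Even i) :
    interleave u v (i + 1) - interleave u v i = v i - u i := by
  simp [interleave, hi, Nat.even_add_one]

lemma interleave_succ_sub_of_odd (hi : Odd i) :
    interleave u v (i + 1) - interleave u v i
      = (u (i + 1) - u i) + (u (i - 1 + 1) - u (i - 1)) + (u (i - 1) - v (i - 1)) := by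
  have hne : ¬ Even i := Nat.not_even_iff_odd.2 hi
  simp only [interleave, Nat.even_add_one, hne, not_false_eq_true, if_true, if_false,
    Nat.add_sub_cancel, Nat.sub_add_cancel hi.pos]
  ring

lemma comp_interleave (f : ℝ → ℝ) : f ∘ interleave u v = interleave (f ∘ u) (f ∘ v) := by
  funext i
  simp only [Function.comp_apply, interleave, apply_ite f]

variable {θ : Lacunary}

lemma lacStatQC_interleave (hu : LacStatQC θ u)
    (huv : Tendsto (fun n => dist (u n) (v n)) atTop (𝓝 0)) : LacStatQC θ (interleave u v) := by
  refine lacStatQC_iff.2 fun ε hε => ?_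
  have hstep := lacStatQC_iff.1 hu (ε / 3) (by positivity)
  have hfar : LacDensityZero θ fun i => ε / 3 ≤ |u i - v i| := .of_eventually_not <|
    (huv.eventually (gt_mem_nhds (show (0 : ℝ) < ε / 3 by positivity))).mono fun i hi => by
      rw [Real.dist_eq] at hi; exact not_le.2 hi
  refine ((hstep.or hstep.comp_sub_one).or (hfar.or hfar.comp_sub_one)).mono fun i hi => ?_
  rcases Nat.even_or_odd i with he | ho
  · rw [interleave_succ_sub_of_even he, abs_sub_comm] at hi
    exact .inr (.inl (by linarith))
  · rw [interleave_succ_sub_of_odd ho] at hi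
    have := abs_add_le (u (i + 1) - u i + (u (i - 1 + 1) - u (i - 1))) (u (i - 1) - v (i - 1))
    have := abs_add_le (u (i + 1) - u i) (u (i - 1 + 1) - u (i - 1))
    by_contra! h
    linarith [h.1.1, h.1.2, h.2.2]

lemma not_lacStatQC_interleave {ε : ℝ} (hε : 0 < ε) (huv : ∀ n, ε ≤ dist (u n) (v n)) :
    ¬ LacStatQC θ (interleave u v) := fun h =>
  not_lacDensityZero_even θ <| (lacStatQC_iff.1 h ε hε).mono fun i hi => by
    rw [interleave_succ_sub_of_even hi, abs_sub_comm, ← Real.dist_eq]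
    exact huv i

end interleave

lemma exists_seq_of_not_uniformContinuousOn {α β : Type*} [PseudoMetricSpace α]
    [PseudoMetricSpace β] {f : α → β} {s : Set α} (h : ¬ UniformContinuousOn f s) :
    ∃ ε > 0, ∃ x y : ℕ → α, (∀ n, x n ∈ s) ∧ (∀ n, y n ∈ s) ∧
      Tendsto (fun n => dist (x n) (y n)) atTop (𝓝 0) ∧ ∀ n, ε ≤ dist (f (x n)) (f (y n)) := by
  rw [Metric.uniformContinuousOn_iff] at h
  push Not at h
  obtain ⟨ε, hε, h⟩ := h
  choose x hx y hy hxy hf using fun n : ℕ => h (1 / (n + 1)) Nat.one_div_pos_of_nat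
  exact ⟨ε, hε, x, y, hx, hy, squeeze_zero (fun _ => dist_nonneg) (fun n => (hxy n).le)
    tendsto_one_div_add_atTop_nhds_zero_nat, hf⟩

theorem lacStatWardCont_on_wardCompact_uniformlyContinuous_general (θ : Lacunary)
    (A : Set ℝ) (f : ℝ → ℝ)
    (hA : LacStatWardCompact θ A) (hf : LacStatWardContOn θ f A) :
    UniformContinuousOn f A := by
  by_contra hUC
  obtain ⟨ε, hε, x, y, hx, hy, hxy, hfxy⟩ := exists_seq_of_not_uniformContinuousOn hUC
  obtain ⟨φ, hφ, hqc⟩ := hA x hx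
  have hmem : ∀ i, interleave (x ∘ φ) (y ∘ φ) i ∈ A := fun i => by
    unfold interleave
    split_ifs
    exacts [hx _, hy _]
  have himage := hf _ hmem (lacStatQC_interleave hqc (hxy.comp hφ.tendsto_atTop))
  rw [comp_interleave] at himage
  exact not_lacStatQC_interleave hε (fun n => hfxy (φ n)) himage

theorem lacStatWardCont_on_wardCompact_uniformlyContinuous (θ : Lacunary)
    (hθ : LiminfQGtOne θ) (A : Set ℝ) (f : ℝ → ℝ)
    (hA : LacStatWardCompact θ A) (hf : LacStatWardContOn θ f A) :
    UniformContinuousOn f A :=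
  lacStatWardCont_on_wardCompact_uniformlyContinuous_general θ A f hA hf
end
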